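/- Let t > 0 and let β < Ψ(t). Then for every sequence γ : ℕ → ℂ such that the Hankel matrix {γ_{j+k}}_{j,k≥0} belongs to the injective tensor product ℓ¹⊗̌ℓ¹, one has ∑_{k≥0} |γ_k|^t (1+k)^β < ∞. -/

import Mathlib

open Filter Finset

/-- The Hankel matrix `{γ_{j+k}}` belongs to the injective tensor product `ℓ¹ ⊗̌ ℓ¹`:
the partial bilinear sums against sequences in the unit ball of `ℓ^∞` are uniformly bounded. -/
def HankelInInj (γ : ℕ → ℂ) : Prop :=
  ∃ C : ℝ, ∀ (N : ℕ) (x y : ℕ → ℂ), (∀ j, ‖x j‖ ≤ 1) → (∀ k, ‖y k‖ ≤ 1) →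
    ‖∑ j ∈ Finset.range (N + 1), ∑ k ∈ Finset.range (N + 1), γ (j + k) * x j * y k‖ ≤ C

/-- The function `Ψ` of Pełczyński–Sukochev: `Ψ(t) = (3/2)t - 1` for `t ≤ 2`, `Ψ(t) = t` for `t > 2`. -/
noncomputable def Psi (t : ℝ) : ℝ := if t ≤ 2 then 3 / 2 * t - 1 else t

/-
Testing the Hankel form against `x_j = y_j = z ^ j` with `|z| = 1` shows that the polynomial
`∑_{j,k ≤ N} γ_{j+k} z ^ (j+k)` is bounded by `C` on the unit circle, so by Parseval its
coefficients `(2N + 1 - n) γ_n`, `N ≤ n ≤ 2N`, have square sum at most `C²`. Averaging these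
block estimates over `N` with weights `(1 + N) ^ (s - 3)` gives `∑ |γ_n|² (1 + n) ^ s < ∞` for
every `s < 2`, and the term `n = N` gives `|γ_n| ≤ C / (1 + n)`. The claim interpolates between
the two: for `t ≥ 2` through `|γ_n| ^ t ≤ |γ_n|² (C / (1 + n)) ^ (t - 2)`, for `t ≤ 2` by
comparing `|γ_n|` with `(1 + n) ^ (-3/2)`.
-/

open Polynomial Real

theorem Polynomial.sum_sq_norm_coeff_le_sq {p : ℂ[X]} {C : ℝ}
    (hp : ∀ z : ℂ, ‖z‖ = 1 → ‖p.eval z‖ ≤ C) (s : Finset ℕ) :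
    ∑ n ∈ s, ‖p.coeff n‖ ^ 2 ≤ C ^ 2 := by
  calc ∑ n ∈ s, ‖p.coeff n‖ ^ 2 = ∑ n ∈ s ∩ p.support, ‖p.coeff n‖ ^ 2 := by
        refine (sum_subset inter_subset_left fun n hs hn => ?_).symm
        simp_all
    _ ≤ ∑ n ∈ p.support, ‖p.coeff n‖ ^ 2 :=
        sum_le_sum_of_subset_of_nonneg inter_subset_right fun _ _ _ => by positivity
    _ = Real.circleAverage (fun z => ‖p.eval z‖ ^ 2) 0 1 := p.sum_sq_norm_coeff_eq_circleAverage
    _ ≤ C ^ 2 := by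
        refine Real.circleAverage_mono_on_of_le_circle
          (ContinuousOn.circleIntegrable' (by fun_prop)) fun z hz => ?_
        have hz : ‖z‖ = 1 := by simpa using hz
        exact pow_le_pow_left₀ (norm_nonneg _) (hp z hz) 2

lemma card_range_product_filter_add_eq {N n : ℕ} (h₁ : N ≤ n) (h₂ : n ≤ 2 * N) :
    #{p ∈ range (N + 1) ×ˢ range (N + 1) | p.1 + p.2 = n} = 2 * N + 1 - n := by
  rw [show 2 * N + 1 - n = N + 1 - (n - N) by omega, ← Nat.card_Icc (n - N) N]
  refine card_nbij' Prod.fst (fun j => (j, n - j)) ?_ ?_ ?_ fun _ _ => rfl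
  all_goals
    intro p hp
    simp only [coe_filter, coe_Icc, mem_product, mem_range, Set.mem_ofPred_eq, Set.mem_Icc,
      Prod.ext_iff, true_and] at hp ⊢
    omega

noncomputable def hankelPoly (γ : ℕ → ℂ) (N : ℕ) : ℂ[X] :=
  ∑ p ∈ range (N + 1) ×ˢ range (N + 1), C (γ (p.1 + p.2)) * X ^ (p.1 + p.2)

lemma hankelPoly_eval (γ : ℕ → ℂ) (N : ℕ) (z : ℂ) :
    (hankelPoly γ N).eval z =
      ∑ j ∈ range (N + 1), ∑ k ∈ range (N + 1), γ (j + k) * z ^ j * z ^ k := by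
  simp only [hankelPoly, eval_finsetSum, eval_mul, eval_C, eval_pow, eval_X, sum_product, pow_add,
    mul_assoc]

lemma hankelPoly_coeff (γ : ℕ → ℂ) (N n : ℕ) :
    (hankelPoly γ N).coeff n = #{p ∈ range (N + 1) ×ˢ range (N + 1) | p.1 + p.2 = n} * γ n := by
  simp only [hankelPoly, finsetSum_coeff, coeff_C_mul_X_pow, ← sum_filter, eq_comm (a := n)]
  rw [sum_congr rfl fun p hp => by rw [(mem_filter.1 hp).2], sum_const, nsmul_eq_mul]

lemma summable_one_add_natCast_rpow {q : ℝ} (hq : q < -1) :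
    Summable fun n : ℕ => (1 + (n : ℝ)) ^ q := by
  refine ((summable_nat_add_iff 1).2 (summable_nat_rpow.2 hq)).congr fun n => ?_
  push_cast
  rw [add_comm]

lemma one_add_rpow_le_sum_Icc {s : ℝ} (hs : s ≤ 3) (n : ℕ) :
    (1 + (n : ℝ)) ^ s ≤
      16 * ∑ N ∈ Icc (n - n / 4) n, (1 + (N : ℝ)) ^ (s - 3) * ((2 * N + 1 - n : ℕ) : ℝ) ^ 2 := by
  have hu : (0 : ℝ) < 1 + n := by positivity
  have hcard : (1 + (n : ℝ)) / 4 ≤ #(Icc (n - n / 4) n) := by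
    rw [Nat.card_Icc, show n + 1 - (n - n / 4) = n / 4 + 1 by omega, div_le_iff₀ (by norm_num)]
    exact_mod_cast (by omega : 1 + n ≤ (n / 4 + 1) * 4)
  have hterm : ∀ N ∈ Icc (n - n / 4) n, (1 + (n : ℝ)) ^ (s - 3) * ((1 + n) / 2) ^ 2 ≤
      (1 + (N : ℝ)) ^ (s - 3) * ((2 * N + 1 - n : ℕ) : ℝ) ^ 2 := by
    intro N hN
    rw [mem_Icc] at hN
    have hpow := rpow_le_rpow_of_nonpos (z := s - 3) (by positivity)
      (add_le_add_right (Nat.cast_le.2 hN.2) 1) (by linarith)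
    have hlen : (1 + (n : ℝ)) / 2 ≤ ((2 * N + 1 - n : ℕ) : ℝ) := by
      rw [div_le_iff₀ (by norm_num)]
      exact_mod_cast (by omega : 1 + n ≤ (2 * N + 1 - n) * 2)
    exact mul_le_mul hpow (pow_le_pow_left₀ (by positivity) hlen 2) (by positivity) (by positivity)
  calc (1 + (n : ℝ)) ^ s = 16 * ((1 + n) / 4 * ((1 + n) ^ (s - 3) * ((1 + n) / 2) ^ 2)) := by
        rw [rpow_sub hu, rpow_ofNat]
        field_simp
        ring
    _ ≤ 16 * (#(Icc (n - n / 4) n) * ((1 + n) ^ (s - 3) * ((1 + n) / 2) ^ 2)) := by gcongr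
    _ ≤ 16 * ∑ N ∈ Icc (n - n / 4) n, (1 + (N : ℝ)) ^ (s - 3) * ((2 * N + 1 - n : ℕ) : ℝ) ^ 2 := by
        rw [← nsmul_eq_mul]
        gcongr
        exact card_nsmul_le_sum _ _ _ hterm

theorem summable_mul_one_add_rpow_of_sum_Icc_le {a : ℕ → ℝ} (ha : ∀ n, 0 ≤ a n) {B : ℝ}
    (hB : ∀ N, ∑ n ∈ Icc N (2 * N), ((2 * N + 1 - n : ℕ) : ℝ) ^ 2 * a n ≤ B) {s : ℝ} (hs : s < 2) :
    Summable fun n => a n * (1 + (n : ℝ)) ^ s := by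
  set w : ℕ → ℝ := fun N => (1 + (N : ℝ)) ^ (s - 3)
  set G : ℕ → ℕ → ℝ := fun N n =>
    if n ∈ Icc N (2 * N) then ((2 * N + 1 - n : ℕ) : ℝ) ^ 2 * a n else 0
  have hG : ∀ N n, 0 ≤ G N n := fun N n => by
    simp only [G]; split_ifs <;> positivity [ha n]
  have hB₀ : 0 ≤ B := (ha 0).trans (by simpa using hB 0)
  have hrow : ∀ N R, ∑ n ∈ range R, G N n ≤ B := fun N R =>
    calc ∑ n ∈ range R, G N n
        = ∑ n ∈ range R ∩ Icc N (2 * N), ((2 * N + 1 - n : ℕ) : ℝ) ^ 2 * a n := sum_ite_mem _ _ _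
      _ ≤ B := (sum_le_sum_of_subset_of_nonneg inter_subset_right
          fun n _ _ => by positivity [ha n]).trans (hB N)
  have hcol : ∀ n R, n < R → a n * (1 + (n : ℝ)) ^ s ≤ 16 * ∑ N ∈ range R, w N * G N n := by
    intro n R hnR
    calc a n * (1 + (n : ℝ)) ^ s
        ≤ a n * (16 * ∑ N ∈ Icc (n - n / 4) n, w N * ((2 * N + 1 - n : ℕ) : ℝ) ^ 2) := by
          gcongr
          · exact ha n
          · exact one_add_rpow_le_sum_Icc (by linarith) n
      _ = 16 * ∑ N ∈ Icc (n - n / 4) n, w N * G N n := by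
          rw [mul_left_comm, mul_sum]
          refine congrArg _ (sum_congr rfl fun N hN => ?_)
          rw [mem_Icc] at hN
          have hmem : n ∈ Icc N (2 * N) := mem_Icc.2 ⟨hN.2, by omega⟩
          simp only [G, if_pos hmem]
          ring
      _ ≤ 16 * ∑ N ∈ range R, w N * G N n := by
          gcongr
          · exact fun N _ _ => mul_nonneg (by positivity) (hG N n)
          · intro N hN
            simp only [mem_Icc, mem_range] at hN ⊢
            omega
  refine summable_of_sum_range_le (c := 16 * (B * ∑' N, w N)) (fun n => by positivity [ha n])
    fun R => ?_
  calc ∑ n ∈ range R, a n * (1 + (n : ℝ)) ^ s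
      ≤ ∑ n ∈ range R, 16 * ∑ N ∈ range R, w N * G N n :=
        sum_le_sum fun n hn => hcol n R (mem_range.1 hn)
    _ = 16 * ∑ N ∈ range R, w N * ∑ n ∈ range R, G N n := by
        rw [← mul_sum, sum_comm]
        simp only [mul_sum]
    _ ≤ 16 * ∑ N ∈ range R, w N * B := by
        gcongr with N
        exact hrow N R
    _ ≤ 16 * (B * ∑' N, w N) := by
        rw [← sum_mul, mul_comm (∑ N ∈ range R, w N)]
        gcongr
        exact (summable_one_add_natCast_rpow (by linarith)).sum_le_tsum _ fun N _ => by positivity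

lemma Real.rpow_le_sq_mul_rpow_add_rpow {a b t : ℝ} (ha : 0 ≤ a) (hb : 0 < b) (ht₀ : 0 ≤ t)
    (ht₂ : t ≤ 2) : a ^ t ≤ a ^ 2 * b ^ (t - 2) + b ^ t := by
  rcases le_or_gt a b with hab | hab
  · have := rpow_le_rpow ha hab ht₀
    nlinarith [rpow_nonneg hb.le (t - 2), sq_nonneg a]
  · calc a ^ t = a ^ 2 * a ^ (t - 2) := by
          rw [← rpow_natCast, ← rpow_add (hb.trans hab)]; norm_num
      _ ≤ a ^ 2 * b ^ (t - 2) :=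
          mul_le_mul_of_nonneg_left (rpow_le_rpow_of_nonpos hb hab.le (by linarith)) (sq_nonneg a)
      _ ≤ a ^ 2 * b ^ (t - 2) + b ^ t := le_add_of_nonneg_right (rpow_nonneg hb.le t)

lemma Real.rpow_le_sq_mul_rpow_of_le {a b t : ℝ} (ha : 0 ≤ a) (hab : a ≤ b) (ht : 2 ≤ t) :
    a ^ t ≤ a ^ 2 * b ^ (t - 2) := by
  calc a ^ t = a ^ 2 * a ^ (t - 2) := by
        rw [← rpow_natCast, ← rpow_add' ha (by norm_num; linarith)]; norm_num
    _ ≤ a ^ 2 * b ^ (t - 2) :=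
        mul_le_mul_of_nonneg_left (rpow_le_rpow ha hab (by linarith)) (sq_nonneg a)

namespace HankelInInj

variable {γ : ℕ → ℂ}

theorem exists_forall_sum_Icc_le (hγ : HankelInInj γ) :
    ∃ C : ℝ, ∀ N, ∑ n ∈ Icc N (2 * N), ((2 * N + 1 - n : ℕ) : ℝ) ^ 2 * ‖γ n‖ ^ 2 ≤ C ^ 2 := by
  obtain ⟨C, hC⟩ := hγ
  refine ⟨C, fun N => ?_⟩
  have hbound : ∀ z : ℂ, ‖z‖ = 1 → ‖(hankelPoly γ N).eval z‖ ≤ C := fun z hz => by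
    rw [hankelPoly_eval]
    exact hC N _ _ (fun j => by simp [hz]) (fun k => by simp [hz])
  refine le_of_eq_of_le (sum_congr rfl fun n hn => ?_)
    ((hankelPoly γ N).sum_sq_norm_coeff_le_sq hbound _)
  rw [mem_Icc] at hn
  rw [hankelPoly_coeff, card_range_product_filter_add_eq hn.1 hn.2, norm_mul, Complex.norm_natCast,
    mul_pow]

theorem exists_forall_norm_mul_le (hγ : HankelInInj γ) :
    ∃ C : ℝ, ∀ n : ℕ, ‖γ n‖ * (1 + (n : ℝ)) ≤ C := by
  obtain ⟨C, hC⟩ := hγ.exists_forall_sum_Icc_le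
  refine ⟨|C|, fun n => (le_abs_self _).trans (sq_le_sq.1 ?_)⟩
  have hterm := (single_le_sum (fun m _ => by positivity) (mem_Icc.2 ⟨le_rfl, by omega⟩)).trans
    (hC n)
  rw [show 2 * n + 1 - n = n + 1 by omega] at hterm
  push_cast at hterm
  linarith

theorem summable_sq_norm_mul_rpow (hγ : HankelInInj γ) {s : ℝ} (hs : s < 2) :
    Summable fun n : ℕ => ‖γ n‖ ^ 2 * (1 + (n : ℝ)) ^ s := by
  obtain ⟨C, hC⟩ := hγ.exists_forall_sum_Icc_le
  exact summable_mul_one_add_rpow_of_sum_Icc_le (fun n => by positivity) hC hs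

theorem summable_rpow_mul_of_le_two (hγ : HankelInInj γ) {t β : ℝ} (ht₀ : 0 < t) (ht₂ : t ≤ 2)
    (hβ : β < 3 / 2 * t - 1) : Summable fun k : ℕ => ‖γ k‖ ^ t * (1 + (k : ℝ)) ^ β := by
  refine Summable.of_nonneg_of_le (fun k => by positivity) (fun k => ?_)
    ((hγ.summable_sq_norm_mul_rpow (s := β - 3 / 2 * (t - 2)) (by linarith)).add
      (summable_one_add_natCast_rpow (q := β - 3 / 2 * t) (by linarith)))
  have hu : (0 : ℝ) < 1 + k := by positivity
  have hpow : ∀ x, ((1 + (k : ℝ)) ^ (-(3 / 2) : ℝ)) ^ x * (1 + (k : ℝ)) ^ β =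
      (1 + (k : ℝ)) ^ (β - 3 / 2 * x) := fun x => by
    rw [← rpow_mul hu.le, ← rpow_add hu]
    ring_nf
  calc ‖γ k‖ ^ t * (1 + (k : ℝ)) ^ β
      ≤ (‖γ k‖ ^ 2 * ((1 + (k : ℝ)) ^ (-(3 / 2) : ℝ)) ^ (t - 2) +
          ((1 + (k : ℝ)) ^ (-(3 / 2) : ℝ)) ^ t) * (1 + (k : ℝ)) ^ β := by
        gcongr
        exact rpow_le_sq_mul_rpow_add_rpow (norm_nonneg _) (by positivity) ht₀.le ht₂
    _ = _ := by rw [add_mul, mul_assoc, hpow, hpow]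

theorem summable_rpow_mul_of_two_le (hγ : HankelInInj γ) {t β : ℝ} (ht : 2 ≤ t) (hβ : β < t) :
    Summable fun k : ℕ => ‖γ k‖ ^ t * (1 + (k : ℝ)) ^ β := by
  obtain ⟨C, hC⟩ := hγ.exists_forall_norm_mul_le
  refine Summable.of_nonneg_of_le (fun k => by positivity) (fun k => ?_)
    ((hγ.summable_sq_norm_mul_rpow (s := β - (t - 2)) (by linarith)).mul_left (C ^ (t - 2)))
  have hu : (0 : ℝ) < 1 + k := by positivity
  have hC₀ : 0 ≤ C := (by positivity : (0 : ℝ) ≤ ‖γ k‖ * (1 + k)).trans (hC k)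
  calc ‖γ k‖ ^ t * (1 + (k : ℝ)) ^ β
      ≤ ‖γ k‖ ^ 2 * (C / (1 + k)) ^ (t - 2) * (1 + (k : ℝ)) ^ β := by
        gcongr
        exact rpow_le_sq_mul_rpow_of_le (norm_nonneg _) ((le_div_iff₀ hu).2 (hC k)) ht
    _ = C ^ (t - 2) * (‖γ k‖ ^ 2 * (1 + (k : ℝ)) ^ (β - (t - 2))) := by
        rw [div_rpow hC₀ hu.le, rpow_sub hu β]
        ring

end HankelInInj

theorem hankel_inj_weighted_summable_of_lt_Psi (t β : ℝ) (ht : 0 < t) (hβ : β < Psi t)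
    (γ : ℕ → ℂ) (hγ : HankelInInj γ) :
    Summable fun k : ℕ => ‖γ k‖ ^ t * (1 + (k : ℝ)) ^ β := by
  unfold Psi at hβ
  split_ifs at hβ with ht₂
  · exact hγ.summable_rpow_mul_of_le_two ht ht₂ hβ
  · exact hγ.summable_rpow_mul_of_two_le (by linarith) hβ
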